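/- For 1 < p < ∞ and n ≥ 2, the function v(x) = |x|^α x₁ is p-harmonic on ℝⁿ \ {0} (i.e. div(|∇v|^{p-2}∇v) = 0 pointwise) if and only if: (i) α = 0, or (ii) α = -2 and p = n, or (iii) α = -n and p = 2. -/

import Mathlib

open Real
open scoped RealInnerProductSpace

/-- The `p`-Laplacian `div(|∇f|^(p-2) ∇f)` of `f`, computed classically as the trace of the
derivative of the vector field `y ↦ ‖∇f(y)‖^(p-2) • ∇f(y)`. -/
noncomputable def pLaplacian {n : ℕ} (p : ℝ) (f : EuclideanSpace ℝ (Fin n) → ℝ)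
    (x : EuclideanSpace ℝ (Fin n)) : ℝ :=
  LinearMap.trace ℝ (EuclideanSpace ℝ (Fin n))
    ((fderiv ℝ (fun y => ‖gradient f y‖ ^ (p - 2) • gradient f y) x).toLinearMap)

/-! Write `N = ‖x‖²`, `t = xᵢ` and `S = N + α(α+2)t²`. Then `∇v = N^(α/2-1) (α t x + N eᵢ)` and
`‖∇v‖² = N^(α-1) S`; since `S ≥ N - t² ≥ 0`, the gradient vanishes exactly where `S = 0`. The field
`‖∇v‖^(p-2) ∇v` has the form `F(x) x + Ψ(x) eᵢ`, whose divergence is `n F + DF(x) x + DΨ(x) eᵢ`,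
and this works out to a positive factor times `t (A N + B t²)` for two polynomials `A`, `B` in
`n, p, α`. Testing at points with `t = 1` and two values of `N` shows that `Δ_p v` vanishes
identically iff `A = B = 0`; the solutions of this system are the three cases of the theorem
together with `α = -1, p = 3 - n`, which `p > 1` and `n ≥ 2` rule out. -/

theorem trace_fderiv_smul_self_add_smul_const {E : Type*} [NormedAddCommGroup E]
    [NormedSpace ℝ E] [FiniteDimensional ℝ E] {F Ψ : E → ℝ} {F' Ψ' : E →L[ℝ] ℝ} {x : E}
    (e : E) (hF : HasFDerivAt F F' x) (hΨ : HasFDerivAt Ψ Ψ' x) :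
    LinearMap.trace ℝ E (fderiv ℝ (fun y => F y • y + Ψ y • e) x).toLinearMap
      = Module.finrank ℝ E * F x + F' x + Ψ' e := by
  have hW : HasFDerivAt (fun y => F y • y + Ψ y • e) _ x :=
    (hF.smul (hasFDerivAt_id x)).add (hΨ.smul_const e)
  rw [hW.fderiv]
  simp [ContinuousLinearMap.coe_smulRight, mul_comm]

section
variable {n : ℕ} (α : ℝ) (i : Fin n)

local notation "E" => EuclideanSpace ℝ (Fin n)

theorem norm_rpow_eq_sq_rpow (y : E) (a : ℝ) : ‖y‖ ^ a = (‖y‖ ^ 2) ^ (a / 2) := by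
  rw [← Real.rpow_natCast, ← Real.rpow_mul (norm_nonneg y)]
  ring_nf

theorem hasGradientAt_norm_rpow_mul_apply {y : E} (hy : y ≠ 0) :
    HasGradientAt (fun z : E => ‖z‖ ^ α * z i)
      ((‖y‖ ^ 2) ^ (α / 2 - 1) • ((α * y i) • y + ‖y‖ ^ 2 • EuclideanSpace.single i 1)) y := by
  have hN : ‖y‖ ^ 2 ≠ 0 := by positivity
  have hf := ((hasStrictFDerivAt_norm_sq y).hasFDerivAt.rpow_const (p := α / 2) (Or.inl hN)).mul
    (EuclideanSpace.proj i : E →L[ℝ] ℝ).hasFDerivAt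
  have hsplit : (‖y‖ ^ 2) ^ (α / 2) = (‖y‖ ^ 2) ^ (α / 2 - 1) * ‖y‖ ^ 2 := by
    rw [← Real.rpow_add_one hN, sub_add_cancel]
  rw [hasGradientAt_iff_hasFDerivAt]
  convert hf using 1
  · rfl
  · funext z
    exact congrArg (· * z i) (norm_rpow_eq_sq_rpow z α)
  · ext w
    simp only [smul_add, map_add, map_smul, add_apply, smul_apply,
      InnerProductSpace.toDual_apply_apply, smul_eq_mul, EuclideanSpace.inner_single_left, map_one,
      one_mul, hsplit, PiLp.proj_apply, innerSL_apply_apply, nsmul_eq_mul, Nat.cast_ofNat]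
    ring

theorem norm_sq_add_mul_sq_apply_nonneg (y : E) : 0 ≤ ‖y‖ ^ 2 + α * (α + 2) * y i ^ 2 := by
  have hi : y i ^ 2 ≤ ‖y‖ ^ 2 := by
    simpa only [Real.norm_eq_abs, sq_abs] using
      pow_le_pow_left₀ (norm_nonneg _) (PiLp.norm_apply_le y i) 2
  nlinarith [sq_nonneg (α + 1), sq_nonneg (y i)]

theorem norm_gradient_norm_rpow_mul_apply_sq {y : E} (hy : y ≠ 0) :
    ‖gradient (fun z : E => ‖z‖ ^ α * z i) y‖ ^ 2
      = (‖y‖ ^ 2) ^ (α - 1) * (‖y‖ ^ 2 + α * (α + 2) * y i ^ 2) := by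
  have hN : 0 < ‖y‖ ^ 2 := by positivity
  have hpow : ((‖y‖ ^ 2) ^ (α / 2 - 1)) ^ 2 * ‖y‖ ^ 2 = (‖y‖ ^ 2) ^ (α - 1) := by
    rw [← Real.rpow_natCast, ← Real.rpow_mul hN.le, ← Real.rpow_add_one hN.ne']
    ring_nf
  rw [(hasGradientAt_norm_rpow_mul_apply α i hy).gradient, norm_smul, mul_pow, norm_add_sq_real,
    Real.norm_eq_abs, sq_abs, ← hpow]
  simp only [norm_smul, norm_mul, Real.norm_eq_abs, mul_pow, sq_abs, inner_smul_right,
    inner_smul_left, conj_trivial, EuclideanSpace.inner_single_right, one_mul, norm_pow,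
    PiLp.norm_single, norm_one, mul_one]
  ring

theorem rpow_norm_gradient_norm_rpow_mul_apply {y : E} (hy : y ≠ 0) (s : ℝ) :
    ‖gradient (fun z : E => ‖z‖ ^ α * z i) y‖ ^ s
      = (‖y‖ ^ 2) ^ ((α - 1) * s / 2) * (‖y‖ ^ 2 + α * (α + 2) * y i ^ 2) ^ (s / 2) := by
  rw [norm_rpow_eq_sq_rpow, norm_gradient_norm_rpow_mul_apply_sq α i hy,
    Real.mul_rpow (by positivity) (norm_sq_add_mul_sq_apply_nonneg α i y),
    ← Real.rpow_mul (by positivity)]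
  ring_nf

theorem gradient_norm_rpow_mul_apply_ne_zero_iff {y : E} (hy : y ≠ 0) :
    gradient (fun z : E => ‖z‖ ^ α * z i) y ≠ 0 ↔ 0 < ‖y‖ ^ 2 + α * (α + 2) * y i ^ 2 := by
  have hN : 0 < (‖y‖ ^ 2) ^ (α - 1) := by positivity
  rw [(norm_sq_add_mul_sq_apply_nonneg α i y).lt_iff_ne', ← norm_ne_zero_iff,
    ← pow_ne_zero_iff two_ne_zero, norm_gradient_norm_rpow_mul_apply_sq α i hy, mul_ne_zero_iff,
    and_iff_right hN.ne']

theorem rpow_norm_gradient_smul_gradient_norm_rpow_mul_apply (p : ℝ) {y : E} (hy : y ≠ 0) :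
    ‖gradient (fun z : E => ‖z‖ ^ α * z i) y‖ ^ (p - 2)
        • gradient (fun z : E => ‖z‖ ^ α * z i) y
      = (α * ((‖y‖ ^ 2) ^ (((α - 1) * p - α) / 2)
          * (‖y‖ ^ 2 + α * (α + 2) * y i ^ 2) ^ ((p - 2) / 2) * y i)) • y
        + ((‖y‖ ^ 2) ^ (((α - 1) * p - α) / 2)
          * (‖y‖ ^ 2 + α * (α + 2) * y i ^ 2) ^ ((p - 2) / 2) * ‖y‖ ^ 2)
          • EuclideanSpace.single i 1 := by
  have hN : 0 < ‖y‖ ^ 2 := by positivity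
  have hexp : (‖y‖ ^ 2) ^ ((α - 1) * (p - 2) / 2) * (‖y‖ ^ 2) ^ (α / 2 - 1)
      = (‖y‖ ^ 2) ^ (((α - 1) * p - α) / 2) := by
    rw [← Real.rpow_add hN]
    ring_nf
  rw [rpow_norm_gradient_norm_rpow_mul_apply α i hy,
    (hasGradientAt_norm_rpow_mul_apply α i hy).gradient, smul_smul, smul_add, smul_smul, smul_smul,
    ← hexp]
  congr 2 <;> ring

theorem pLaplacian_norm_rpow_mul_apply (p : ℝ) {x : E} (hx : x ≠ 0)
    (hS : 0 < ‖x‖ ^ 2 + α * (α + 2) * x i ^ 2) :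
    pLaplacian p (fun y : E => ‖y‖ ^ α * y i) x
      = (‖x‖ ^ 2) ^ (((α - 1) * p - α) / 2)
        * (‖x‖ ^ 2 + α * (α + 2) * x i ^ 2) ^ ((p - 4) / 2)
        * x i * (α * (α + n + (p - 2) * (2 * α + 3)) * ‖x‖ ^ 2
          + α * (α + 2) * (α * (α + n) + (p - 2) * (α ^ 2 + α - 1)) * x i ^ 2) := by
  have hN : 0 < ‖x‖ ^ 2 := by positivity
  have hfield := Filter.eventuallyEq_of_mem (isOpen_ne.mem_nhds hx)
    fun y (hy : y ≠ 0) => rpow_norm_gradient_smul_gradient_norm_rpow_mul_apply α i p hy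
  have hNd := (hasStrictFDerivAt_norm_sq x).hasFDerivAt
  have hid := (EuclideanSpace.proj i : E →L[ℝ] ℝ).hasFDerivAt (x := x)
  have hSd := hNd.add ((hid.pow 2).const_mul (α * (α + 2)))
  have hGd := (hNd.rpow_const (p := ((α - 1) * p - α) / 2) (Or.inl hN.ne')).mul
    (hSd.rpow_const (p := (p - 2) / 2) (Or.inl hS.ne'))
  rw [pLaplacian, hfield.fderiv_eq]
  refine (trace_fderiv_smul_self_add_smul_const _ ((hGd.mul hid).const_mul α)
    (hGd.mul hNd)).trans ?_
  rw [show (p - 4) / 2 = (p - 2) / 2 - 1 by ring]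
  simp only [finrank_euclideanSpace, Fintype.card_fin, PiLp.proj_apply, Pi.add_apply,
    EuclideanSpace.coe_proj, Pi.mul_apply, Real.rpow_sub_one hS.ne', Real.rpow_sub_one hN.ne',
    Nat.add_one_sub_one, pow_one, nsmul_eq_mul, Nat.cast_ofNat, smul_add, add_apply, smul_apply,
    smul_eq_mul, innerSL_apply_apply, real_inner_self_eq_norm_sq, conj_trivial,
    EuclideanSpace.inner_single_right, one_mul, PiLp.single_eq_same, mul_one]
  field_simp
  ring

theorem exists_apply_eq_one_norm_sq_eq {j : Fin n} (hij : i ≠ j) (s : ℝ) :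
    ∃ x : E, x i = 1 ∧ ‖x‖ ^ 2 = 1 + s ^ 2 := by
  refine ⟨EuclideanSpace.single i 1 + s • EuclideanSpace.single j 1, by simp [hij.symm], ?_⟩
  rw [norm_add_sq_real]
  simp [norm_smul, inner_smul_right, EuclideanSpace.inner_single_right, hij]

theorem pLaplacian_coeffs_eq_zero_of_forall_eq_zero (p : ℝ) {j : Fin n} (hij : i ≠ j)
    (h : ∀ x : E, x ≠ 0 → gradient (fun y : E => ‖y‖ ^ α * y i) x ≠ 0 →
      pLaplacian p (fun y : E => ‖y‖ ^ α * y i) x = 0) :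
    α * (α + n + (p - 2) * (2 * α + 3)) = 0
      ∧ α * (α + 2) * (α * (α + n) + (p - 2) * (α ^ 2 + α - 1)) = 0 := by
  have htest : ∀ s : ℝ, s ≠ 0 → α * (α + n + (p - 2) * (2 * α + 3)) * (1 + s ^ 2)
      + α * (α + 2) * (α * (α + n) + (p - 2) * (α ^ 2 + α - 1)) = 0 := by
    intro s hs
    obtain ⟨x, hxi, hxn⟩ := exists_apply_eq_one_norm_sq_eq i hij s
    have hx : x ≠ 0 := by rintro rfl; simp at hxi
    have hS : 0 < ‖x‖ ^ 2 + α * (α + 2) * x i ^ 2 := by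
      rw [hxn, hxi]; nlinarith [sq_nonneg (α + 1), pow_two_pos_of_ne_zero hs]
    have h0 := h x hx ((gradient_norm_rpow_mul_apply_ne_zero_iff α i hx).mpr hS)
    rw [pLaplacian_norm_rpow_mul_apply α i p hx hS, hxn, hxi] at h0
    rw [hxn, hxi] at hS
    simp only [one_pow, mul_one] at h0 hS
    exact (mul_eq_zero.mp h0).resolve_left (mul_pos (by positivity) (Real.rpow_pos_of_pos hS _)).ne'
  have h1 := htest 1 one_ne_zero
  have h2 := htest 2 two_ne_zero
  constructor <;> linarith

end

theorem pLaplacian_coeffs_eq_zero_iff {n p α : ℝ} (hn : 2 ≤ n) (hp : 1 < p) :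
    (α * (α + n + (p - 2) * (2 * α + 3)) = 0
      ∧ α * (α + 2) * (α * (α + n) + (p - 2) * (α ^ 2 + α - 1)) = 0)
      ↔ α = 0 ∨ (α = -2 ∧ p = n) ∨ (α = -n ∧ p = 2) := by
  constructor
  · rintro ⟨hA, hB⟩
    rcases eq_or_ne α 0 with hα | hα
    · exact Or.inl hα
    have hA' : α + n + (p - 2) * (2 * α + 3) = 0 := (mul_eq_zero.mp hA).resolve_left hα
    rcases mul_eq_zero.mp hB with hαα2 | hB'
    · have hα2 : α = -2 := by linarith [(mul_eq_zero.mp hαα2).resolve_left hα]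
      subst hα2
      exact Or.inr (Or.inl ⟨rfl, by linarith⟩)
    have hsq : (p - 2) * (α + 1) ^ 2 = 0 := by linear_combination α * hA' - hB'
    rcases mul_eq_zero.mp hsq with hp2 | hα1
    · replace hp2 : p = 2 := by linarith
      subst hp2
      exact Or.inr (Or.inr ⟨by linarith, rfl⟩)
    · replace hα1 : α = -1 := by linarith [pow_eq_zero_iff two_ne_zero |>.mp hα1]
      subst hα1
      linarith
  · rintro (rfl | ⟨rfl, rfl⟩ | ⟨rfl, rfl⟩) <;> constructor <;> ring

theorem stmt_1 (n : ℕ) (hn : 2 ≤ n) (p α : ℝ) (hp : 1 < p)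
    (v : EuclideanSpace ℝ (Fin n) → ℝ)
    (hv : v = fun y => ‖y‖ ^ α * y ⟨0, by omega⟩) :
    (∀ x : EuclideanSpace ℝ (Fin n), x ≠ 0 → gradient v x ≠ 0 → pLaplacian p v x = 0) ↔
      (α = 0 ∨ (α = -2 ∧ p = n) ∨ (α = -n ∧ p = 2)) := by
  subst hv
  rw [← pLaplacian_coeffs_eq_zero_iff (by exact_mod_cast hn) hp]
  refine ⟨pLaplacian_coeffs_eq_zero_of_forall_eq_zero α _ p (j := ⟨1, by omega⟩) (by simp), ?_⟩
  rintro ⟨hA, hB⟩ x hx hg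
  rw [pLaplacian_norm_rpow_mul_apply α _ p hx
    ((gradient_norm_rpow_mul_apply_ne_zero_iff α _ hx).mp hg), hA, hB]
  ring
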